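/- Assuming the lambda calculus with constructors is confluent, case-completion reflects convertibility on hereditarily defined terms: if t₁ and t₂ are hereditarily defined and ⌈t₁⌉ ≈ ⌈t₂⌉ (convertible by the calculus), then t₁ ≈ t₂. -/

import Mathlib

/- Terms of the lambda calculus with `n` constructors (de Bruijn indices).
`Ob n` plays the role of `Option (Tm n)`: a case-binding is a partial map
`Fin n → Ob n` from constructors to terms. -/
mutual
inductive Tm (n : ℕ) : Type where
  | var : ℕ → Tm n
  | app : Tm n → Tm n → Tm n
  | lam : Tm n → Tm n
  | cst : Fin n → Tm n
  | cas : (Fin n → Ob n) → Tm n → Tm n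
inductive Ob (n : ℕ) : Type where
  | none : Ob n
  | some : Tm n → Ob n
end

namespace LC

variable {n : ℕ}

/- Shift free de Bruijn indices `≥ k` by `d`. -/
mutual
def lift (d k : ℕ) : Tm n → Tm n
  | .var i => .var (if i < k then i else i + d)
  | .app t u => .app (lift d k t) (lift d k u)
  | .lam t => .lam (lift d (k+1) t)
  | .cst c => .cst c
  | .cas θ t => .cas (fun c => liftO d k (θ c)) (lift d k t)
def liftO (d k : ℕ) : Ob n → Ob n
  | .none => .none
  | .some t => .some (lift d k t)
end

/- Lift a case-binding (used for the CaseLam rule, where the bound variable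
must not occur free in the binding). -/
def liftB (θ : Fin n → Ob n) : Fin n → Ob n := fun c => liftO 1 0 (θ c)

/- Substitution of `u` for the variable `k` (capture-avoiding). -/
mutual
def subst (u : Tm n) (k : ℕ) : Tm n → Tm n
  | .var i => if i < k then .var i else if i = k then lift k 0 u else .var (i-1)
  | .app t v => .app (subst u k t) (subst u k v)
  | .lam t => .lam (subst u (k+1) t)
  | .cst c => .cst c
  | .cas θ t => .cas (fun c => substO u k (θ c)) (subst u k t)
def substO (u : Tm n) (k : ℕ) : Ob n → Ob n
  | .none => .none
  | .some t => .some (subst u k t)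
end

/- `{θ}·(-)` applied inside an optional branch. -/
def casO (θ : Fin n → Ob n) : Ob n → Ob n
  | .none => .none
  | .some u => .some (.cas θ u)

/- Composition of case-bindings: `(θ∘φ)(c) = {θ}·φ(c)` for `c ∈ dom φ`. -/
def compB (θ φ : Fin n → Ob n) : Fin n → Ob n := fun c => casO θ (φ c)

/- One-step reduction of the lambda calculus with constructors:
AppLam, LamApp, CaseCons, CaseApp, CaseLam, CaseCase, closed under all contexts. -/
inductive Step : Tm n → Tm n → Prop where
  | appLam (t u : Tm n) : Step (.app (.lam t) u) (subst u 0 t)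
  | lamApp (t : Tm n) : Step (.lam (.app (lift 1 0 t) (.var 0))) t
  | caseCons (θ : Fin n → Ob n) (c : Fin n) (u : Tm n) :
      θ c = .some u → Step (.cas θ (.cst c)) u
  | caseApp (θ : Fin n → Ob n) (t u : Tm n) :
      Step (.cas θ (.app t u)) (.app (.cas θ t) u)
  | caseLam (θ : Fin n → Ob n) (t : Tm n) :
      Step (.cas θ (.lam t)) (.lam (.cas (liftB θ) t))
  | caseCase (θ φ : Fin n → Ob n) (t : Tm n) :
      Step (.cas θ (.cas φ t)) (.cas (compB θ φ) t)
  | appL {t t' : Tm n} (u : Tm n) : Step t t' → Step (.app t u) (.app t' u)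
  | appR (t : Tm n) {u u' : Tm n} : Step u u' → Step (.app t u) (.app t u')
  | lamC {t t' : Tm n} : Step t t' → Step (.lam t) (.lam t')
  | casT (θ : Fin n → Ob n) {t t' : Tm n} : Step t t' → Step (.cas θ t) (.cas θ t')
  | casB (θ : Fin n → Ob n) (c : Fin n) {u u' : Tm n} (t : Tm n) :
      θ c = .some u → Step u u' →
      Step (.cas θ t) (.cas (Function.update θ c (.some u')) t)

/- One-step reduction by the CaseCase rule only (closed under all contexts). -/
inductive StepCC : Tm n → Tm n → Prop where
  | caseCase (θ φ : Fin n → Ob n) (t : Tm n) :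
      StepCC (.cas θ (.cas φ t)) (.cas (compB θ φ) t)
  | appL {t t' : Tm n} (u : Tm n) : StepCC t t' → StepCC (.app t u) (.app t' u)
  | appR (t : Tm n) {u u' : Tm n} : StepCC u u' → StepCC (.app t u) (.app t u')
  | lamC {t t' : Tm n} : StepCC t t' → StepCC (.lam t) (.lam t')
  | casT (θ : Fin n → Ob n) {t t' : Tm n} : StepCC t t' → StepCC (.cas θ t) (.cas θ t')
  | casB (θ : Fin n → Ob n) (c : Fin n) {u u' : Tm n} (t : Tm n) :
      θ c = .some u → StepCC u u' →
      StepCC (.cas θ t) (.cas (Function.update θ c (.some u')) t)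

/- One-step reduction λC⁻ : every rule except CaseCase (closed under all contexts). -/
inductive StepM : Tm n → Tm n → Prop where
  | appLam (t u : Tm n) : StepM (.app (.lam t) u) (subst u 0 t)
  | lamApp (t : Tm n) : StepM (.lam (.app (lift 1 0 t) (.var 0))) t
  | caseCons (θ : Fin n → Ob n) (c : Fin n) (u : Tm n) :
      θ c = .some u → StepM (.cas θ (.cst c)) u
  | caseApp (θ : Fin n → Ob n) (t u : Tm n) :
      StepM (.cas θ (.app t u)) (.app (.cas θ t) u)
  | caseLam (θ : Fin n → Ob n) (t : Tm n) :
      StepM (.cas θ (.lam t)) (.lam (.cas (liftB θ) t))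
  | appL {t t' : Tm n} (u : Tm n) : StepM t t' → StepM (.app t u) (.app t' u)
  | appR (t : Tm n) {u u' : Tm n} : StepM u u' → StepM (.app t u) (.app t u')
  | lamC {t t' : Tm n} : StepM t t' → StepM (.lam t) (.lam t')
  | casT (θ : Fin n → Ob n) {t t' : Tm n} : StepM t t' → StepM (.cas θ t) (.cas θ t')
  | casB (θ : Fin n → Ob n) (c : Fin n) {u u' : Tm n} (t : Tm n) :
      θ c = .some u → StepM u u' →
      StepM (.cas θ t) (.cas (Function.update θ c (.some u')) t)

/- A term is defined when none of its subterms is a match failure `{θ}·c` with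
`c ∉ dom θ`. -/
inductive Defined : Tm n → Prop where
  | var (i : ℕ) : Defined (.var i)
  | cst (c : Fin n) : Defined (.cst c)
  | app {t u : Tm n} : Defined t → Defined u → Defined (.app t u)
  | lam {t : Tm n} : Defined t → Defined (.lam t)
  | cas {θ : Fin n → Ob n} {t : Tm n} :
      (∀ c u, θ c = .some u → Defined u) → Defined t →
      (∀ c, t = .cst c → θ c ≠ .none) → Defined (.cas θ t)

/- Hereditarily defined: every reduct (in any number of steps) is defined. -/
def HD (t : Tm n) : Prop := ∀ u, Relation.ReflTransGen Step t u → Defined u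

section Completion
variable [NeZero n]

/- The canonical match failure `{}·c₁` used to fill missing branches. -/
def failTm : Tm n := .cas (fun _ => .none) (.cst 0)

/- Case-completion: replace every case-binding by its total completion,
filling each missing branch with `{}·c₁`. -/
mutual
def cpl : Tm n → Tm n
  | .var i => .var i
  | .app t u => .app (cpl t) (cpl u)
  | .lam t => .lam (cpl t)
  | .cst c => .cst c
  | .cas θ t => .cas (fun c => .some (cplO (θ c))) (cpl t)
def cplO : Ob n → Tm n
  | .none => failTm
  | .some u => cpl u
end

end Completion

/- The structural measure μ. -/
mutual
def mes : Tm n → ℕ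
  | .var _ => 1
  | .cst _ => 1
  | .lam t => mes t + 1
  | .app t u => mes t + mes u
  | .cas θ t => mes t * ((∑ c : Fin n, mesO (θ c)) + 2)
def mesO : Ob n → ℕ
  | .none => 0
  | .some t => mes t
end

end LC

/-!
Call `s` a completion of `t` when `s` is `t` with each missing branch filled by a *junk* term,
a tower of cases over the match failure `{}·c₁`; `⌈t⌉` is a completion of `t`. A step from a
completion of a hereditarily defined `t` is matched by at most one step from `t`: the only rule
that could not be matched is CaseCons selecting a filled branch, which would be a match failure
in `t`. Junk only reduces to junk and completes nothing, so `t` is determined by any of its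
completions. Confluence gives a common reduct of `⌈t₁⌉` and `⌈t₂⌉`; it completes a reduct of
`t₁` and a reduct of `t₂`, which must therefore coincide.
-/

namespace LC

open Relation

variable {n : ℕ}

local infix:50 " ↠ " => ReflTransGen Step

theorem steps_app_left {a a' : Tm n} (b : Tm n) (h : a ↠ a') : Tm.app a b ↠ Tm.app a' b :=
  ReflTransGen.lift (Tm.app · b) (fun _ _ => Step.appL b) _ _ h

theorem steps_app_right (a : Tm n) {b b' : Tm n} (h : b ↠ b') : Tm.app a b ↠ Tm.app a b' :=
  ReflTransGen.lift (Tm.app a ·) (fun _ _ => Step.appR a) _ _ h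

theorem steps_lam {a a' : Tm n} (h : a ↠ a') : Tm.lam a ↠ Tm.lam a' :=
  ReflTransGen.lift Tm.lam (fun _ _ => Step.lamC) _ _ h

theorem steps_cas_scrutinee (Ξ : Fin n → Ob n) {a a' : Tm n} (h : a ↠ a') :
    Tm.cas Ξ a ↠ Tm.cas Ξ a' :=
  ReflTransGen.lift (Tm.cas Ξ ·) (fun _ _ => Step.casT Ξ) _ _ h

theorem step_cas_update (Ξ : Fin n → Ob n) (c : Fin n) (a : Tm n) {u u' : Tm n}
    (h : Step u u') :
    Step (.cas (Function.update Ξ c (.some u)) a) (.cas (Function.update Ξ c (.some u')) a) := by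
  simpa only [Function.update_idem] using
    Step.casB (Function.update Ξ c (.some u)) c a (Function.update_self ..) h

theorem steps_cas_branch {Ξ : Fin n → Ob n} {c : Fin n} {w w' : Tm n} (a : Tm n)
    (hc : Ξ c = .some w) (h : w ↠ w') :
    Tm.cas Ξ a ↠ Tm.cas (Function.update Ξ c (.some w')) a := by
  have hΞ : Function.update Ξ c (.some w) = Ξ := by rw [← hc, Function.update_eq_self]
  simpa only [Function.onFun, hΞ] using
    ReflTransGen.lift (fun u => Tm.cas (Function.update Ξ c (.some u)) a)
      (fun _ _ => step_cas_update Ξ c a) _ _ h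

theorem HD.of_steps {t t' : Tm n} (h : HD t) (hr : t ↠ t') : HD t' :=
  fun u hu => h u (hr.trans hu)

theorem HD.of_context (f : Tm n → Tm n) (hf : ∀ a b, Step a b → Step (f a) (f b))
    (hdef : ∀ a, Defined (f a) → Defined a) {t : Tm n} (h : HD (f t)) : HD t :=
  fun u hu => hdef u (h _ (ReflTransGen.lift f hf _ _ hu))

theorem HD.app_left {a b : Tm n} (h : HD (.app a b)) : HD a :=
  h.of_context (.app · b) (fun _ _ => .appL b) fun _ h => by cases h; assumption

theorem HD.app_right {a b : Tm n} (h : HD (.app a b)) : HD b :=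
  h.of_context (.app a ·) (fun _ _ => .appR a) fun _ h => by cases h; assumption

theorem HD.lam {a : Tm n} (h : HD (.lam a)) : HD a :=
  h.of_context .lam (fun _ _ => .lamC) fun _ h => by cases h; assumption

theorem HD.cas_scrutinee {Ξ : Fin n → Ob n} {a : Tm n} (h : HD (.cas Ξ a)) : HD a :=
  h.of_context (.cas Ξ ·) (fun _ _ => .casT Ξ) fun _ h => by cases h; assumption

theorem HD.cas_branch {Ξ : Fin n → Ob n} {c : Fin n} {w a : Tm n} (h : HD (.cas Ξ a))
    (hc : Ξ c = .some w) : HD w := fun u hu => by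
  cases h _ (steps_cas_branch a hc hu) with
  | cas hbranches _ _ => exact hbranches c u (Function.update_self ..)

section Completes

variable [NeZero n]

inductive Junk : Tm n → Prop where
  | fail : Junk failTm
  | cas (θ : Fin n → Ob n) {g : Tm n} : Junk g → Junk (.cas θ g)

theorem Junk.lift {g : Tm n} (d k : ℕ) (h : Junk g) : Junk (LC.lift d k g) := by
  induction h with
  | fail => exact .fail
  | cas θ _ ih => exact .cas _ ih

theorem Junk.subst {g : Tm n} (u : Tm n) (k : ℕ) (h : Junk g) : Junk (LC.subst u k g) := by
  induction h with
  | fail => exact .fail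
  | cas θ _ ih => exact .cas _ ih

theorem Junk.step {g g' : Tm n} (h : Junk g) (hs : Step g g') : Junk g' := by
  induction h generalizing g' with
  | fail =>
    cases hs with
    | caseCons _ _ _ hc | casB _ _ _ hc => cases hc
    | casT _ hst => cases hst
  | cas θ hg ih =>
    cases hs with
    | caseCons | caseApp | caseLam => cases hg
    | caseCase θ φ a =>
      cases hg with
      | fail => exact .fail
      | cas _ hg' => exact .cas _ hg'
    | casT _ hst => exact .cas _ (ih hst)
    | casB => exact .cas _ hg

theorem Junk.of_lift {g : Tm n} {d k : ℕ} (h : Junk (LC.lift d k g)) : Junk g := by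
  generalize hg : LC.lift d k g = g' at h
  induction h generalizing g with
  | fail =>
    cases g with
    | cas θ a =>
      simp only [LC.lift, failTm, Tm.cas.injEq] at hg
      obtain ⟨hθ, ha⟩ := hg
      cases a <;> simp only [LC.lift, Tm.cst.injEq, reduceCtorEq] at ha
      have hθ' : θ = fun _ => .none := funext fun c => by
        cases hc : θ c with
        | none => rfl
        | some t => simpa [hc, liftO] using congrFun hθ c
      subst ha hθ'
      exact .fail
    | _ => simp [LC.lift, failTm] at hg
  | cas θ _ ih =>
    cases g with
    | cas φ a =>
      simp only [LC.lift, Tm.cas.injEq] at hg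
      exact .cas φ (ih hg.2)
    | _ => simp [LC.lift] at hg

mutual
inductive Completes : Tm n → Tm n → Prop where
  | var (i : ℕ) : Completes (.var i) (.var i)
  | cst (c : Fin n) : Completes (.cst c) (.cst c)
  | app {s₁ t₁ s₂ t₂ : Tm n} :
      Completes s₁ t₁ → Completes s₂ t₂ → Completes (.app s₁ s₂) (.app t₁ t₂)
  | lam {s t : Tm n} : Completes s t → Completes (.lam s) (.lam t)
  | cas {θ Ξ : Fin n → Ob n} {s t : Tm n} :
      (∀ c, CompletesO (θ c) (Ξ c)) → Completes s t → Completes (.cas θ s) (.cas Ξ t)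
inductive CompletesO : Ob n → Ob n → Prop where
  | some {s t : Tm n} : Completes s t → CompletesO (.some s) (.some t)
  | junk {g : Tm n} : Junk g → CompletesO (.some g) .none
end

theorem completesO_some_iff {s : Tm n} {O : Ob n} :
    CompletesO (.some s) O ↔ (∃ t, O = .some t ∧ Completes s t) ∨ (O = .none ∧ Junk s) := by
  constructor
  · rintro (h | h)
    exacts [.inl ⟨_, rfl, h⟩, .inr ⟨rfl, h⟩]
  · rintro (⟨t, rfl, h⟩ | ⟨rfl, h⟩)
    exacts [.some h, .junk h]

mutual
theorem completes_cpl : ∀ t : Tm n, Completes (cpl t) t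
  | .var i => .var i
  | .app a b => .app (completes_cpl a) (completes_cpl b)
  | .lam a => .lam (completes_cpl a)
  | .cst c => .cst c
  | .cas θ a => .cas (fun c => completesO_cplO (θ c)) (completes_cpl a)
theorem completesO_cplO : ∀ o : Ob n, CompletesO (.some (cplO o)) o
  | .none => .junk .fail
  | .some a => .some (completes_cpl a)
end

theorem Junk.not_completes {g : Tm n} (h : Junk g) (t : Tm n) : ¬ Completes g t := by
  induction h generalizing t with
  | fail =>
    rintro (_ | _ | _ | _ | ⟨hb, _⟩)
    cases hb 0
  | cas θ _ ih =>
    rintro (_ | _ | _ | _ | ⟨_, hs⟩)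
    exact ih _ hs

mutual
theorem Completes.unique : ∀ {s t₁ t₂ : Tm n}, Completes s t₁ → Completes s t₂ → t₁ = t₂
  | _, _, _, .var _, .var _ => rfl
  | _, _, _, .cst _, .cst _ => rfl
  | _, _, _, .app ha₁ hb₁, .app ha₂ hb₂ => by rw [ha₁.unique ha₂, hb₁.unique hb₂]
  | _, _, _, .lam ha₁, .lam ha₂ => by rw [ha₁.unique ha₂]
  | _, _, _, .cas hθ₁ ha₁, .cas hθ₂ ha₂ => by
    rw [ha₁.unique ha₂, funext fun c => (hθ₁ c).unique (hθ₂ c)]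
theorem CompletesO.unique : ∀ {o O₁ O₂ : Ob n}, CompletesO o O₁ → CompletesO o O₂ → O₁ = O₂
  | _, _, _, .some h₁, .some h₂ => by rw [h₁.unique h₂]
  | _, _, _, .some h₁, .junk hj => (hj.not_completes _ h₁).elim
  | _, _, _, .junk hj, .some h₂ => (hj.not_completes _ h₂).elim
  | _, _, _, .junk _, .junk _ => rfl
end

mutual
theorem Completes.lift (d : ℕ) : ∀ {s t : Tm n} (k : ℕ), Completes s t →
    Completes (LC.lift d k s) (LC.lift d k t)
  | _, _, _, .var _ => .var _
  | _, _, _, .cst _ => .cst _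
  | _, _, k, .app ha hb => .app (ha.lift d k) (hb.lift d k)
  | _, _, k, .lam ha => .lam (ha.lift d (k + 1))
  | _, _, k, .cas hθ ha => .cas (fun c => (hθ c).lift d k) (ha.lift d k)
theorem CompletesO.lift (d : ℕ) : ∀ {o O : Ob n} (k : ℕ), CompletesO o O →
    CompletesO (liftO d k o) (liftO d k O)
  | _, _, k, .some h => .some (h.lift d k)
  | _, _, k, .junk hj => .junk (hj.lift d k)
end

mutual
theorem Completes.subst {u U : Tm n} (hu : Completes u U) : ∀ {s t : Tm n} (k : ℕ),
    Completes s t → Completes (LC.subst u k s) (LC.subst U k t)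
  | _, _, k, .var i => by
    simp only [LC.subst]
    split_ifs
    exacts [.var _, hu.lift k 0, .var _]
  | _, _, _, .cst _ => .cst _
  | _, _, k, .app ha hb => .app (hu.subst k ha) (hu.subst k hb)
  | _, _, k, .lam ha => .lam (hu.subst (k + 1) ha)
  | _, _, k, .cas hθ ha => .cas (fun c => CompletesO.subst hu k (hθ c)) (hu.subst k ha)
theorem CompletesO.subst {u U : Tm n} (hu : Completes u U) : ∀ {o O : Ob n} (k : ℕ),
    CompletesO o O → CompletesO (substO u k o) (substO U k O)
  | _, _, k, .some h => .some (hu.subst k h)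
  | _, _, k, .junk hj => .junk (hj.subst u k)
end

mutual
theorem Completes.exists_eq_lift (d : ℕ) : ∀ (s : Tm n) {X : Tm n} (k : ℕ),
    Completes (LC.lift d k s) X → ∃ t, X = LC.lift d k t ∧ Completes s t
  | .var i, _, _, .var _ => ⟨.var i, rfl, .var i⟩
  | .cst c, _, _, .cst _ => ⟨.cst c, rfl, .cst c⟩
  | .app a b, _, k, .app ha hb => by
    obtain ⟨a₀, rfl, ha₀⟩ := Completes.exists_eq_lift d a k ha
    obtain ⟨b₀, rfl, hb₀⟩ := Completes.exists_eq_lift d b k hb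
    exact ⟨.app a₀ b₀, rfl, .app ha₀ hb₀⟩
  | .lam a, _, k, .lam ha => by
    obtain ⟨a₀, rfl, ha₀⟩ := Completes.exists_eq_lift d a (k + 1) ha
    exact ⟨.lam a₀, rfl, .lam ha₀⟩
  | .cas θ a, _, k, .cas hθ ha => by
    obtain ⟨a₀, rfl, ha₀⟩ := Completes.exists_eq_lift d a k ha
    choose Ξ₀ hΞ hθ₀ using fun c => CompletesO.exists_eq_liftO d (θ c) k (hθ c)
    refine ⟨.cas Ξ₀ a₀, ?_, .cas hθ₀ ha₀⟩
    rw [funext hΞ]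
    rfl
theorem CompletesO.exists_eq_liftO (d : ℕ) : ∀ (o : Ob n) {O : Ob n} (k : ℕ),
    CompletesO (liftO d k o) O → ∃ O₀, O = liftO d k O₀ ∧ CompletesO o O₀
  | .some a, _, k, .some ha => by
    obtain ⟨a₀, rfl, ha₀⟩ := Completes.exists_eq_lift d a k ha
    exact ⟨.some a₀, rfl, .some ha₀⟩
  | .some _, _, _, .junk hj => ⟨.none, rfl, .junk (Junk.of_lift hj)⟩
end

theorem CompletesO.casO {θ Ξ : Fin n → Ob n} (hθ : ∀ c, CompletesO (θ c) (Ξ c)) {o O : Ob n} :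
    CompletesO o O → CompletesO (LC.casO θ o) (LC.casO Ξ O)
  | .some h => .some (.cas hθ h)
  | .junk hj => .junk (.cas θ hj)

theorem CompletesO.update {θ Ξ : Fin n → Ob n} (hθ : ∀ c, CompletesO (θ c) (Ξ c)) (c : Fin n)
    {o O : Ob n} (h : CompletesO o O) (c' : Fin n) :
    CompletesO (Function.update θ c o c') (Function.update Ξ c O c') := by
  rcases eq_or_ne c' c with rfl | hc
  · simpa only [Function.update_self] using h
  · simpa only [Function.update_of_ne hc] using hθ c'

theorem CompletesO.update_junk {θ Ξ : Fin n → Ob n} (hθ : ∀ c, CompletesO (θ c) (Ξ c))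
    {c : Fin n} (hc : Ξ c = .none) {g : Tm n} (hg : Junk g) (c' : Fin n) :
    CompletesO (Function.update θ c (.some g) c') (Ξ c') := by
  simpa only [← hc, Function.update_eq_self] using CompletesO.update hθ c (.junk hg) c'

theorem exists_branch_of_defined {θ Ξ : Fin n → Ob n} (hθ : ∀ c, CompletesO (θ c) (Ξ c))
    {c : Fin n} {u : Tm n} (hc : θ c = .some u) (hdef : Defined (.cas Ξ (.cst c))) :
    ∃ w, Ξ c = .some w ∧ Completes u w := by
  rcases completesO_some_iff.mp (hc ▸ hθ c) with h | ⟨hnone, -⟩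
  · exact h
  · cases hdef with
    | cas _ _ hcst => exact absurd hnone (hcst c rfl)

theorem Completes.exists_of_step {s s' : Tm n} (hs : Step s s') :
    ∀ {t : Tm n}, Completes s t → HD t → ∃ t', t ↠ t' ∧ Completes s' t' := by
  induction hs with
  | appLam =>
    rintro _ (_ | _ | ⟨(_ | _ | _ | ha), hb⟩) -
    exact ⟨_, .single (.appLam _ _), hb.subst 0 ha⟩
  | lamApp a =>
    rintro _ (_ | _ | _ | (_ | _ | ⟨ha, (_ | _)⟩)) -
    obtain ⟨a₀, rfl, ha₀⟩ := Completes.exists_eq_lift 1 a 0 ha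
    exact ⟨a₀, .single (.lamApp a₀), ha₀⟩
  | caseCons θ c u hθc =>
    rintro _ (_ | _ | _ | _ | ⟨hθ, (_ | _)⟩) hd
    obtain ⟨w, hw, hu⟩ := exists_branch_of_defined hθ hθc (hd _ .refl)
    exact ⟨w, .single (.caseCons _ c w hw), hu⟩
  | caseApp =>
    rintro _ (_ | _ | _ | _ | ⟨hθ, (_ | _ | ⟨ha, hb⟩)⟩) -
    exact ⟨_, .single (.caseApp _ _ _), .app (.cas hθ ha) hb⟩
  | caseLam =>
    rintro _ (_ | _ | _ | _ | ⟨hθ, (_ | _ | _ | ha)⟩) -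
    exact ⟨_, .single (.caseLam _ _), .lam (.cas (fun c => (hθ c).lift 1 0) ha)⟩
  | caseCase =>
    rintro _ (_ | _ | _ | _ | ⟨hθ, (_ | _ | _ | _ | ⟨hφ, ha⟩)⟩) -
    exact ⟨_, .single (.caseCase _ _ _), .cas (fun c => (hφ c).casO hθ) ha⟩
  | appL _ _ ih =>
    rintro _ (_ | _ | ⟨ha, hb⟩) hd
    obtain ⟨_, hsteps, ha'⟩ := ih ha hd.app_left
    exact ⟨_, steps_app_left _ hsteps, .app ha' hb⟩
  | appR _ _ ih =>
    rintro _ (_ | _ | ⟨ha, hb⟩) hd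
    obtain ⟨_, hsteps, hb'⟩ := ih hb hd.app_right
    exact ⟨_, steps_app_right _ hsteps, .app ha hb'⟩
  | lamC _ ih =>
    rintro _ (_ | _ | _ | ha) hd
    obtain ⟨_, hsteps, ha'⟩ := ih ha hd.lam
    exact ⟨_, steps_lam hsteps, .lam ha'⟩
  | casT _ _ ih =>
    rintro _ (_ | _ | _ | _ | ⟨hθ, ha⟩) hd
    obtain ⟨_, hsteps, ha'⟩ := ih ha hd.cas_scrutinee
    exact ⟨_, steps_cas_scrutinee _ hsteps, .cas hθ ha'⟩
  | casB θ c _ hθc hstep ih =>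
    rintro _ (_ | _ | _ | _ | ⟨hθ, ha⟩) hd
    rcases completesO_some_iff.mp (hθc ▸ hθ c) with ⟨w, hw, hu⟩ | ⟨hw, hj⟩
    · obtain ⟨w', hsteps, hu'⟩ := ih hu (hd.cas_branch hw)
      exact ⟨_, steps_cas_branch _ hw hsteps, .cas (CompletesO.update hθ c (.some hu')) ha⟩
    · exact ⟨_, .refl, .cas (CompletesO.update_junk hθ hw (hj.step hstep)) ha⟩

theorem Completes.exists_of_steps {s s' : Tm n} (hs : s ↠ s') {t : Tm n} (h : Completes s t)
    (hd : HD t) : ∃ t', t ↠ t' ∧ Completes s' t' := by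
  induction hs with
  | refl => exact ⟨t, .refl, h⟩
  | tail _ hstep ih =>
    obtain ⟨t', ht', h'⟩ := ih
    obtain ⟨t'', ht'', h''⟩ := h'.exists_of_step hstep (hd.of_steps ht')
    exact ⟨t'', ht'.trans ht'', h''⟩

end Completes

/-- Assuming the calculus is confluent, case-completion reflects convertibility
on hereditarily defined terms: if `t₁`, `t₂` are hereditarily defined and
`⌈t₁⌉ ≈ ⌈t₂⌉`, then `t₁ ≈ t₂`. -/
theorem cpl_reflects_conv {n : ℕ} [NeZero n]
    (confl : ∀ a b c : Tm n, Relation.ReflTransGen Step a b →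
      Relation.ReflTransGen Step a c →
      ∃ d, Relation.ReflTransGen Step b d ∧ Relation.ReflTransGen Step c d)
    {t₁ t₂ : Tm n} (h₁ : HD t₁) (h₂ : HD t₂)
    (h : Relation.EqvGen Step (cpl t₁) (cpl t₂)) :
    Relation.EqvGen Step t₁ t₂ := by
  have hjoin : Equivalence (Join (ReflTransGen (Step (n := n)))) := equivalence_join confl
  obtain ⟨s, hs₁, hs₂⟩ := hjoin.eqvGen_iff.mp
    (EqvGen.mono (fun a b hab => ⟨b, .single hab, .refl⟩) _ _ h)
  obtain ⟨u₁, hu₁, hs₁⟩ := (completes_cpl t₁).exists_of_steps hs₁ h₁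
  obtain ⟨u₂, hu₂, hs₂⟩ := (completes_cpl t₂).exists_of_steps hs₂ h₂
  obtain rfl : u₁ = u₂ := hs₁.unique hs₂
  exact (EqvGen.reflTransGen_le_eqvGen _ _ _ hu₁).trans _ _ _
    ((EqvGen.reflTransGen_le_eqvGen _ _ _ hu₂).symm _ _)

end LC
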